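/- For integers n and ω with 5 ≤ ω < ⌈n/2⌉, the Turán graph T_{n,ω} satisfies q₁(T_{n,ω}) > 3n/2 + ω − 4. In particular, the conjectured bound q₁ − ω ≤ 3n/2 − 4 of Hansen and Lucas fails in this range. -/

import Mathlib

open SimpleGraph

/-- The signless Laplacian matrix `Q(G) = D(G) + A(G)` of a simple graph. -/
noncomputable def signlessLaplacian {V : Type*} [Fintype V] [DecidableEq V]
    (G : SimpleGraph V) : Matrix V V ℝ := by
  classical exact Matrix.diagonal (fun v => (G.degree v : ℝ)) + G.adjMatrix ℝ

/-- The signless Laplacian spectral radius: the largest eigenvalue of `Q(G)`. -/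
noncomputable def q1 {V : Type*} [Fintype V] [DecidableEq V] (G : SimpleGraph V) : ℝ :=
  sSup {μ : ℝ | ∃ x : V → ℝ, x ≠ 0 ∧ (signlessLaplacian G).mulVec x = μ • x}

/-- The join `G ∇ H` of two simple graphs. -/
def gJoin {α β : Type*} (G : SimpleGraph α) (H : SimpleGraph β) : SimpleGraph (α ⊕ β) where
  Adj x y :=
    Sum.elim (fun a => Sum.elim (fun b => G.Adj a b) (fun _ => True) y)
             (fun a => Sum.elim (fun _ => True) (fun b => H.Adj a b) y) x
  symm := ⟨by rintro (a|a) (b|b) h <;> simp_all [SimpleGraph.adj_comm]⟩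
  loopless := ⟨by rintro (a|a) h <;> simp_all⟩

/-- `G` is a complete multipartite graph with exactly `t` (nonempty) parts. -/
def IsCompleteMultipartite' {α : Type*} (G : SimpleGraph α) (t : ℕ) : Prop :=
  ∃ f : α → Fin t, Function.Surjective f ∧ ∀ u v, G.Adj u v ↔ f u ≠ f v

/-- The kite graph `Ki_{n,ω}`: a clique on `{0,…,ω-1}` together with a path on the
remaining vertices, attached to the clique by a bridge. -/
def kite (n ω : ℕ) : SimpleGraph (Fin n) where
  Adj i j := i ≠ j ∧ (((i : ℕ) < ω ∧ (j : ℕ) < ω) ∨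
    ((i : ℕ) + 1 = (j : ℕ) ∧ ω ≤ (j : ℕ)) ∨ ((j : ℕ) + 1 = (i : ℕ) ∧ ω ≤ (i : ℕ)))
  symm := ⟨by rintro i j ⟨h1, h2⟩; exact ⟨h1.symm, by tauto⟩⟩
  loopless := ⟨fun i h => h.1 rfl⟩

/-- The closed-form bound `((3ω-4)k + 3r - 2 + √(k²ω² + ((2r+4)ω-8r)k + (r-2)²))/2`. -/
noncomputable def turanBound (ω k r : ℕ) : ℝ :=
  ((3 * (ω : ℝ) - 4) * k + 3 * r - 2 +
    Real.sqrt ((k : ℝ)^2 * (ω : ℝ)^2 + ((2 * (r : ℝ) + 4) * ω - 8 * r) * k + ((r : ℝ) - 2)^2)) / 2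


/-!
Write `n = w k + r` with `r < w`: the Turán graph has `r` parts of size `k + 1` and `w - r` parts
of size `k`. On vectors `x` constant on the parts, the signless Laplacian acts by
`(Q x) v = (n - 2 |P(v)|) x v + ∑ u, x u`, so it reduces to a `2 × 2` quotient matrix whose larger
eigenvalue is `turanBound w k r`. Explicitly, if `σ` is the square root in `turanBound`
(`σ² = (n + 2)² - 8 r (k + 1)`), the vector equal to `σ + n - 2` on the large parts and `σ + n + 2`
on the small ones is an eigenvector, whence `turanBound w k r ≤ q₁`. The bound
`turanBound w k r > 3n/2 + w - 4` is equivalent to `σ² > (2w + 4k - 6)²`, and the difference of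
the two sides factors into terms that are nonnegative for `w ≥ 5`, `k ≥ 2`, one of them positive
as `n > 2w` forces `k ≥ 3` or `r > 0`.
-/

open Finset Matrix

theorem sum_range_comp_mod {M : Type*} [AddCommMonoid M] (f : ℕ → M) (n w : ℕ) :
    ∑ i ∈ range n, f (i % w) = (n / w) • ∑ j ∈ range w, f j + ∑ j ∈ range (n % w), f j := by
  have hmul (k : ℕ) : ∑ i ∈ range (w * k), f (i % w) = k • ∑ j ∈ range w, f j := by
    induction k with
    | zero => simp
    | succ k ih =>
      rw [Nat.mul_succ, sum_range_add, ih, succ_nsmul]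
      congr 1
      refine sum_congr rfl fun i hi => ?_
      rw [Nat.mul_add_mod, Nat.mod_eq_of_lt (mem_range.1 hi)]
  conv_lhs => rw [← Nat.div_add_mod n w]
  rw [sum_range_add, hmul]
  congr 1
  refine sum_congr rfl fun i hi => ?_
  rw [Nat.mul_add_mod]
  rcases w.eq_zero_or_pos with rfl | hw
  · rw [Nat.mod_zero]
  · exact congrArg f (Nat.mod_eq_of_lt ((mem_range.1 hi).trans (Nat.mod_lt n hw)))

theorem card_filter_fin_mod (n w : ℕ) (p : ℕ → Prop) [DecidablePred p] :
    #{u : Fin n | p (u % w)} = n / w * #{j ∈ range w | p j} + #{j ∈ range (n % w) | p j} := by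
  simp only [card_filter]
  rw [Fin.sum_univ_eq_sum_range (fun i => if p (i % w) then 1 else 0),
    sum_range_comp_mod (fun i => if p i then 1 else 0), smul_eq_mul]

theorem card_filter_fin_mod_eq {n w j : ℕ} (hj : j < w) :
    #{u : Fin n | u % w = j} = n / w + if j < n % w then 1 else 0 := by
  rw [card_filter_fin_mod n w (· = j), filter_eq', filter_eq', if_pos (mem_range.2 hj)]
  split_ifs with h <;> simp_all

theorem card_filter_fin_mod_lt_mod {n w : ℕ} (hw : 0 < w) :
    #{u : Fin n | u % w < n % w} = n % w * (n / w + 1) := by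
  have hlt : (range w).filter (· < n % w) = range (n % w) := by
    ext j
    simp only [mem_filter, mem_range]
    have := Nat.mod_lt n hw
    omega
  rw [card_filter_fin_mod n w (· < n % w), hlt, filter_true_of_mem fun j hj => mem_range.1 hj,
    card_range]
  ring

theorem le_q1_of_mulVec_eq_smul {V : Type*} [Fintype V] [DecidableEq V] (G : SimpleGraph V)
    {x : V → ℝ} {μ : ℝ} (hx : x ≠ 0) (h : signlessLaplacian G *ᵥ x = μ • x) : μ ≤ q1 G := by
  refine le_csSup (Set.Finite.bddAbove ?_) ⟨x, hx, h⟩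
  refine (Module.End.finite_hasEigenvalue (toLin' (signlessLaplacian G))).subset ?_
  rintro ν ⟨y, hy, hν⟩
  exact Module.End.hasEigenvalue_of_hasEigenvector
    ⟨Module.End.mem_eigenspace_iff.2 (by rwa [toLin'_apply]), hy⟩

theorem signlessLaplacian_mulVec_apply {V : Type*} [Fintype V] [DecidableEq V]
    (G : SimpleGraph V) [DecidableRel G.Adj] (x : V → ℝ) (v : V) :
    (signlessLaplacian G *ᵥ x) v = ∑ u, if G.Adj v u then x v + x u else 0 := by
  have hQ : signlessLaplacian G = diagonal (fun v => (G.degree v : ℝ)) + G.adjMatrix ℝ := by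
    unfold signlessLaplacian
    congr!
  rw [hQ, add_mulVec, Pi.add_apply, mulVec_diagonal, SimpleGraph.adjMatrix_mulVec_apply,
    ← SimpleGraph.card_neighborFinset_eq_degree, SimpleGraph.neighborFinset_eq_filter,
    ← sum_filter, sum_add_distrib, sum_const, nsmul_eq_mul]

theorem turanGraph_signlessLaplacian_mulVec_apply {n w : ℕ} {x : Fin n → ℝ} (v : Fin n)
    (hx : ∀ u : Fin n, u % w = v % w → x u = x v) :
    (signlessLaplacian (turanGraph n w) *ᵥ x) v =
      (n - 2 * #{u : Fin n | u % w = v % w}) * x v + ∑ u, x u := by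
  have hsplit (u : Fin n) : (if (turanGraph n w).Adj v u then x v + x u else 0) =
      x v + x u - if u % w = v % w then 2 * x v else 0 := by
    by_cases h : u % w = v % w
    · rw [if_neg (by simp [turanGraph_adj, h]), if_pos h, hx u h]
      ring
    · rw [if_pos (turanGraph_adj.2 (Ne.symm h)), if_neg h, sub_zero]
  rw [signlessLaplacian_mulVec_apply, sum_congr rfl fun u _ => hsplit u, sum_sub_distrib,
    sum_add_distrib, ← sum_filter, sum_const, sum_const, card_univ, Fintype.card_fin,
    nsmul_eq_mul, nsmul_eq_mul]
  ring

theorem turanBound_le_q1_turanGraph {n w : ℕ} (hw : 0 < w) (hwn : w ≤ n) :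
    turanBound w (n / w) (n % w) ≤ q1 (turanGraph n w) := by
  set k := n / w
  set r := n % w
  have hr : r < w := Nat.mod_lt n hw
  have hn : (n : ℝ) = w * k + r := by exact_mod_cast (Nat.div_add_mod n w).symm
  set D : ℝ := (k : ℝ) ^ 2 * (w : ℝ) ^ 2 + ((2 * (r : ℝ) + 4) * w - 8 * r) * k + ((r : ℝ) - 2) ^ 2
  -- `D = (n - 2b + 2)² + 4b(n - b)`, where `b = r (k + 1)` counts the vertices of the large parts
  have hD : 0 ≤ D := by
    have hrw : (r : ℝ) ≤ w := by exact_mod_cast hr.le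
    nlinarith [sq_nonneg ((w : ℝ) * k - 2 * r * k - r + 2),
      mul_nonneg (mul_nonneg (Nat.cast_nonneg r) (by positivity : (0 : ℝ) ≤ k + 1))
        (mul_nonneg (sub_nonneg.2 hrw) (Nat.cast_nonneg k))]
  set σ := Real.sqrt D
  have hσ : σ ^ 2 = D := Real.sq_sqrt hD
  set x : Fin n → ℝ := fun u => σ + n + 2 - if u % w < r then 4 else 0
  have hsum : ∑ u, x u = n * (σ + n + 2) - 4 * (r * (k + 1)) := by
    have hbig : #{u : Fin n | u % w < r} = r * (k + 1) := card_filter_fin_mod_lt_mod hw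
    simp only [x, sum_sub_distrib, sum_const, card_univ, Fintype.card_fin, ← sum_filter, hbig,
      nsmul_eq_mul]
    push_cast
    ring
  have heig : signlessLaplacian (turanGraph n w) *ᵥ x = turanBound w k r • x := by
    funext v
    rw [turanGraph_signlessLaplacian_mulVec_apply v (fun u hu => by simp only [x, hu]),
      card_filter_fin_mod_eq (Nat.mod_lt v hw), hsum, Pi.smul_apply, smul_eq_mul, turanBound]
    simp only [x]
    rw [hn]
    split_ifs <;> push_cast <;> linear_combination (-1/2) * hσ
  have hx : x ≠ 0 := Function.ne_iff.2 ⟨⟨r, hr.trans_le hwn⟩, by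
    simp only [x, Nat.mod_eq_of_lt hr, lt_irrefl, if_false, sub_zero, Pi.zero_apply]
    positivity⟩
  exact le_q1_of_mulVec_eq_smul _ hx heig

theorem lt_turanBound {n w : ℕ} (h5 : 5 ≤ w) (hnw : 2 * w < n) :
    3 * (n : ℝ) / 2 + w - 4 < turanBound w (n / w) (n % w) := by
  set k := n / w
  set r := n % w
  have hr : r < w := Nat.mod_lt n (by omega)
  have hnkr : w * k + r = n := Nat.div_add_mod n w
  have hk : 2 ≤ k := by
    by_contra! hk
    have : w * k ≤ w * 1 := Nat.mul_le_mul_left w (by omega)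
    omega
  have hkr : 3 ≤ k ∨ 0 < r := by
    by_contra! h
    rw [show k = 2 by omega] at hnkr
    omega
  have hn : (n : ℝ) = w * k + r := by exact_mod_cast hnkr.symm
  have hW : (5 : ℝ) ≤ w := by exact_mod_cast h5
  have hK : (2 : ℝ) ≤ k := by exact_mod_cast hk
  have hR : (0 : ℝ) ≤ r := Nat.cast_nonneg r
  have hKR : (1 : ℝ) ≤ k - 2 + r := by
    rcases hkr with h | h
    · have : (3 : ℝ) ≤ k := by exact_mod_cast h
      linarith
    · have : (1 : ℝ) ≤ r := by exact_mod_cast h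
      linarith
  rw [turanBound, hn]
  suffices 2 * w + 4 * k - 6 < √((k : ℝ) ^ 2 * (w : ℝ) ^ 2 + ((2 * (r : ℝ) + 4) * w - 8 * r) * k
      + ((r : ℝ) - 2) ^ 2) by linarith
  rw [Real.lt_sqrt (by linarith)]
  have hfactor : (k : ℝ) ^ 2 * w ^ 2 + ((2 * r + 4) * w - 8 * r) * k + (r - 2) ^ 2
      - (2 * w + 4 * k - 6) ^ 2 =
      (k - 2) * ((w - 4) * (w * k + r + 2 * w + 4 * k - 4)) +
        r * (k * (w - 4) + 2 * w - 12 + r) := by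
    ring
  nlinarith [mul_nonneg (sub_nonneg.2 hK) (sub_nonneg.2 hW)]

theorem q1_turan_gt_of_mid_cliqueNum (n w : ℕ) (h5 : 5 ≤ w) (hw : w < (n + 1) / 2) :
    q1 (turanGraph n w) > 3 * (n : ℝ) / 2 + w - 4 :=
  (lt_turanBound h5 (by omega)).trans_le (turanBound_le_q1_turanGraph (by omega) (by omega))
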